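/- arXiv:math/0701343 — 2 statements merged into one kernel-verified Lean document; each statement's English description precedes it below -/
import Mathlib

section
/- Let L be a number field and let α ∈ L satisfy 2α ∈ O_L and α ≠ 1/2. Then Σ_σ (|σ(α)|² − Re σ(α)) ≥ 0 and Σ_σ |σ(α) − 1/3|² ≥ [L:ℚ]/9, where both sums range over all field embeddings σ : L → ℂ. -/
/-!
Put `x = 2α - 1`, a nonzero algebraic integer. Its norm is a nonzero integer, so the product
of the `|σ x|²` is at least `1`, and AM-GM gives `Σ_σ |σ x|² ≥ [L:ℚ]`. The first sum is then
nonnegative since `|a|² - Re a = (|2a - 1|² - 1)/4`, and the second follows from the first because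
`|a - 1/3|² - 1/9 = 2/3 (|a|² - Re a) + |a|²/3`.
-/

open NumberField Finset

theorem Real.card_le_sum_of_one_le_prod {ι : Type*} (s : Finset ι) (z : ι → ℝ)
    (hz : ∀ i ∈ s, 0 ≤ z i) (hprod : 1 ≤ ∏ i ∈ s, z i) : (#s : ℝ) ≤ ∑ i ∈ s, z i := by
  rcases s.eq_empty_or_nonempty with rfl | hs
  · simp
  have hcard : (0 : ℝ) < #s := by exact_mod_cast hs.card_pos
  have amgm := Real.geom_mean_le_arith_mean s (fun _ => 1) z (fun _ _ => zero_le_one)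
    (by simpa using hcard) hz
  simp only [Real.rpow_one, one_mul, sum_const, nsmul_eq_mul, mul_one] at amgm
  have geom : 1 ≤ (∏ i ∈ s, z i) ^ (#s : ℝ)⁻¹ := Real.one_le_rpow hprod (by positivity)
  rw [le_div_iff₀ hcard] at amgm
  calc (#s : ℝ) = 1 * #s := (one_mul _).symm
    _ ≤ (∏ i ∈ s, z i) ^ (#s : ℝ)⁻¹ * #s := by gcongr
    _ ≤ ∑ i ∈ s, z i := amgm

theorem Complex.sq_norm_sub_re (z : ℂ) : ‖z‖ ^ 2 - z.re = (‖2 * z - 1‖ ^ 2 - 1) / 4 := by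
  simp only [Complex.sq_norm, Complex.normSq_apply, Complex.sub_re, Complex.sub_im,
    Complex.mul_re, Complex.mul_im, Complex.one_re, Complex.one_im]
  norm_num
  ring

theorem Complex.sq_norm_sub_third (z : ℂ) :
    ‖z - 1 / 3‖ ^ 2 = 1 / 9 + 2 / 3 * (‖z‖ ^ 2 - z.re) + ‖z‖ ^ 2 / 3 := by
  simp only [Complex.sq_norm, Complex.normSq_apply, Complex.sub_re, Complex.sub_im,
    Complex.div_re, Complex.div_im, Complex.one_re, Complex.one_im]
  norm_num
  ring

namespace NumberField

variable {K : Type*} [Field K] [NumberField K]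

theorem prod_norm_embeddings_eq_abs_norm (x : K) :
    ∏ σ : K →+* ℂ, ‖σ x‖ = |Algebra.norm ℚ x| := by
  have h := congr_arg (‖·‖) (Algebra.norm_eq_prod_embeddings ℚ ℂ x)
  rw [norm_prod] at h
  rw [Fintype.prod_equiv (RingHom.equivRatAlgHom K ℂ) (fun σ => ‖σ x‖) (fun φ => ‖φ x‖)
    fun _ => rfl, ← h, eq_ratCast, Complex.norm_ratCast, Rat.cast_abs]

theorem RingOfIntegers.one_le_abs_norm {a : 𝓞 K} (ha : a ≠ 0) :
    1 ≤ |Algebra.norm ℚ (a : K)| := by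
  rw [← Algebra.coe_norm_int, ← Int.cast_abs, ← Int.cast_one, Int.cast_le]
  exact Int.one_le_abs (Algebra.norm_ne_zero_iff.mpr ha)

theorem finrank_le_sum_sq_norm_embeddings {a : 𝓞 K} (ha : a ≠ 0) :
    (Module.finrank ℚ K : ℝ) ≤ ∑ σ : K →+* ℂ, ‖σ a‖ ^ 2 := by
  rw [← Embeddings.card K ℂ, ← card_univ]
  refine Real.card_le_sum_of_one_le_prod _ _ (fun _ _ => by positivity) ?_
  rw [prod_pow, prod_norm_embeddings_eq_abs_norm]
  exact one_le_pow₀ (mod_cast RingOfIntegers.one_le_abs_norm ha)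

end NumberField

/-- For `α ∈ ½𝓞_L` with `α ≠ 1/2`:
`Σ_σ (|σ(α)|² − Re σ(α)) ≥ 0` and `Σ_σ |σ(α) − 1/3|² ≥ [L:ℚ]/9`. -/
theorem statement2 (L : Type*) [Field L] [NumberField L] (α : L)
    (h2 : IsIntegral ℤ (2 * α)) (hα : α ≠ 1 / 2) :
    (0 ≤ ∑ σ : L →+* ℂ, (‖σ α‖ ^ 2 - (σ α).re)) ∧
      ((Module.finrank ℚ L : ℝ) / 9 ≤ ∑ σ : L →+* ℂ, ‖σ α - 1 / 3‖ ^ 2) := by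
  let x : 𝓞 L := ⟨2 * α - 1, h2.sub isIntegral_one⟩
  have hx : x ≠ 0 := fun h => hα <| by
    have : 2 * α - 1 = 0 := congr_arg Subtype.val h
    linear_combination this / 2
  have hfinrank := finrank_le_sum_sq_norm_embeddings hx
  have hfirst : 0 ≤ ∑ σ : L →+* ℂ, (‖σ α‖ ^ 2 - (σ α).re) := by
    have hσ (σ : L →+* ℂ) : ‖σ α‖ ^ 2 - (σ α).re = (‖σ x‖ ^ 2 - 1) / 4 := by
      rw [Complex.sq_norm_sub_re, show (x : L) = 2 * α - 1 from rfl]; simp [map_ofNat]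
    rw [sum_congr rfl fun σ _ => hσ σ, ← sum_div, sum_sub_distrib, sum_const, card_univ,
      Embeddings.card, nsmul_one]
    linarith
  refine ⟨hfirst, ?_⟩
  have hsq_nonneg : 0 ≤ ∑ σ : L →+* ℂ, ‖σ α‖ ^ 2 / 3 := sum_nonneg fun _ _ => by positivity
  simp_rw [Complex.sq_norm_sub_third, sum_add_distrib, ← mul_sum, sum_const, card_univ,
    Embeddings.card, nsmul_eq_mul]
  linarith
end

section
/- Fix n ≥ 1 and Selling parameters p_{ij} > 0 for 0 ≤ i < j ≤ n, and consider the lattice ℤⁿ in ℝⁿ with the inner product ⟨x, y⟩_p = Σ_{0 ≤ i < j ≤ n} p_{ij}(x_i − x_j)(y_i − y_j) (with the convention x₀ = y₀ = 0), with v_i = e_i for 1 ≤ i ≤ n, v₀ = −(e₁ + ⋯ + eₙ), and v_S = Σ_{i∈S} v_i for S ⊆ {0, …, n}. Call a 'chain' any set A of n nonempty proper subsets of {0, …, n} that is totally ordered by inclusion (so A = {S₁ ⊊ S₂ ⊊ ⋯ ⊊ Sₙ}). Then: (a) for every chain A there is a unique point s_A ∈ ℝⁿ satisfying 2⟨v_S,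 s_A⟩_p = ⟨v_S, v_S⟩_p for all S ∈ A; (b) s_A belongs to the Voronoi cell 𝒱 = {x ∈ ℝⁿ : ⟨x, x⟩_p ≤ ⟨x − ℓ, x − ℓ⟩_p for all ℓ ∈ ℤⁿ}; and (c) the map A ↦ s_A is a bijection from the set of chains onto the set of extreme points (vertices) of 𝒱. -/
/-- Extend `x : ℝⁿ` to coordinates indexed by `{0, …, n}` with the convention `x₀ = 0`. -/
def sellingCoord {n : ℕ} (x : Fin n → ℝ) : Fin (n + 1) → ℝ := Fin.cons 0 x

/-- The Selling bilinear form `⟨x, y⟩_p = Σ_{0 ≤ i < j ≤ n} p_{ij}(x_i − x_j)(y_i − y_j)`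
on `ℝⁿ`, with the convention `x₀ = y₀ = 0`. -/
noncomputable def sellingForm (n : ℕ) (p : Fin (n + 1) → Fin (n + 1) → ℝ)
    (x y : Fin n → ℝ) : ℝ :=
  ∑ i : Fin (n + 1), ∑ j : Fin (n + 1),
    if (i : ℕ) < (j : ℕ) then
      p i j * (sellingCoord x i - sellingCoord x j) *
        (sellingCoord y i - sellingCoord y j)
    else 0

/-- The vector `v_S = Σ_{i ∈ S} v_i`, where `v_i = e_i` for `1 ≤ i ≤ n` and
`v₀ = −(e₁ + ⋯ + eₙ)`. -/
def sellingV (n : ℕ) (S : Finset (Fin (n + 1))) : Fin n → ℝ := fun j =>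
  (if j.succ ∈ S then (1 : ℝ) else 0) - (if (0 : Fin (n + 1)) ∈ S then (1 : ℝ) else 0)

/-- The Voronoi cell of the lattice `ℤⁿ` with respect to the Selling form `⟨·,·⟩_p`. -/
noncomputable def sellingVoronoiCell (n : ℕ) (p : Fin (n + 1) → Fin (n + 1) → ℝ) :
    Set (Fin n → ℝ) :=
  {x | ∀ ℓ : Fin n → ℤ,
    sellingForm n p x x ≤
      sellingForm n p (fun i => x i - (ℓ i : ℝ)) (fun i => x i - (ℓ i : ℝ))}

/-- A "chain": a set of `n` nonempty proper subsets of `{0, …, n}` totally ordered by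
inclusion. -/
def IsSellingChain (n : ℕ) (A : Finset (Finset (Fin (n + 1)))) : Prop :=
  A.card = n ∧ (∀ S ∈ A, S.Nonempty ∧ S ≠ Finset.univ) ∧
    ∀ S ∈ A, ∀ T ∈ A, S ⊆ T ∨ T ⊆ S

/-!
Write `Q(T) = ⟨v_T, v_T⟩_p` and `σ_x(T) = Q(T) - 2⟨v_T, x⟩_p`; in the coordinates
`(0, x₁, …, xₙ)` the vector `v_T` acts as the indicator `𝟙[T]` of `T`. A point `x` lies in
the Voronoi cell iff all `σ_x(T) ≥ 0`: shifting an integer vector to be nonnegative and peeling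
off the indicators of its level sets, the cross terms are nonnegative. The function `σ_x` is
submodular, strictly so on crossing pairs because `⟨v_U, v_W⟩_p < 0` for disjoint nonempty
`U`, `W`; hence the tight sets of a point of the cell form a chain. Completing a chain `A` by
`∅` and `{0, …, n}` gives a maximal chain, whose indicators span `ℝ^{n+1}` modulo constants,
so the `n` equations of `A` have a unique solution `s_A`; by Edmonds' greedy argument a
submodular function vanishing on a maximal chain is nonnegative, so `s_A` lies in the cell. A
point of the cell with fewer than `n` tight sets can be moved both ways along a common
solution of their homogeneous equations, so it is not extreme.
-/

open Finset

notation "𝟙[" S "]" => Set.indicator ((S : Finset _) : Set _) 1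

section MaximalChain

variable {α : Type*} {𝒞 : Finset (Finset α)}

theorem Finset.card_injOn_of_isChain (h𝒞 : IsChain (· ⊆ ·) (𝒞 : Set (Finset α))) :
    Set.InjOn card (𝒞 : Set (Finset α)) := by
  intro S hS T hT hST
  rcases h𝒞.total hS hT with h | h
  · exact eq_of_subset_of_card_le h hST.ge
  · exact (eq_of_subset_of_card_le h hST.le).symm

variable [Fintype α]

theorem Finset.image_card_subset_range (𝒞 : Finset (Finset α)) :
    𝒞.image card ⊆ range (Fintype.card α + 1) :=
  image_subset_iff.2 fun S _ ↦ mem_range_succ_iff.2 (card_le_univ S)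

theorem Finset.card_le_of_isChain (h𝒞 : IsChain (· ⊆ ·) (𝒞 : Set (Finset α))) :
    #𝒞 ≤ Fintype.card α + 1 := by
  simpa [card_image_of_injOn (card_injOn_of_isChain h𝒞)] using
    card_le_card (image_card_subset_range 𝒞)

section

variable (h𝒞 : IsChain (· ⊆ ·) (𝒞 : Set (Finset α)))
  (hcard : #𝒞 = Fintype.card α + 1)
include h𝒞 hcard

theorem Finset.exists_mem_card_eq_of_isChain {k : ℕ} (hk : k ≤ Fintype.card α) :
    ∃ S ∈ 𝒞, #S = k := by
  have himage : 𝒞.image card = range (Fintype.card α + 1) := by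
    refine eq_of_subset_of_card_le (image_card_subset_range 𝒞) ?_
    rw [card_image_of_injOn (card_injOn_of_isChain h𝒞), hcard, card_range]
  simpa using himage.ge (mem_range_succ_iff.2 hk)

theorem Finset.univ_mem_of_isChain : univ ∈ 𝒞 := by
  obtain ⟨S, hS, hcardS⟩ := exists_mem_card_eq_of_isChain h𝒞 hcard le_rfl
  rwa [eq_univ_of_card S hcardS] at hS

variable [DecidableEq α]

theorem Finset.exists_insert_eq_of_isChain {S : Finset α} (hS : S ∈ 𝒞) (hne : S.Nonempty) :
    ∃ S' ∈ 𝒞, ∃ j ∉ S', insert j S' = S := by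
  have hpos := hne.card_pos
  obtain ⟨S', hS', hcardS'⟩ :=
    exists_mem_card_eq_of_isChain h𝒞 hcard (k := #S - 1)
      ((Nat.sub_le _ _).trans (card_le_univ S))
  have hsub : S' ⊆ S := (h𝒞.total hS' hS).resolve_right fun h ↦ by
    have := card_le_card h
    omega
  exact ⟨S', hS', exists_eq_insert_iff.2 ⟨hsub, by omega⟩⟩

/-- Edmonds' greedy argument: `f (T ∩ S)` can only grow along the chain. -/
theorem Finset.nonneg_of_submodular_of_isChain {β : Type*} [AddCommMonoid β] [PartialOrder β]
    [IsOrderedAddMonoid β] {f : Finset α → β}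
    (hf : ∀ S T, f (S ∪ T) + f (S ∩ T) ≤ f S + f T) (hzero : ∀ S ∈ 𝒞, f S = 0)
    (T : Finset α) : 0 ≤ f T := by
  have key : ∀ S ∈ 𝒞, 0 ≤ f (T ∩ S) := by
    intro S
    induction S using Finset.strongInduction with
    | _ S ih =>
      intro hS
      rcases S.eq_empty_or_nonempty with rfl | hne
      · rw [inter_empty, hzero ∅ hS]
      obtain ⟨S', hS', j, hj, rfl⟩ := exists_insert_eq_of_isChain h𝒞 hcard hS hne
      have ih' := ih S' (ssubset_insert hj) hS'
      by_cases hjT : j ∈ T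
      · have hsub := hf S' (T ∩ insert j S')
        rw [show S' ∪ T ∩ insert j S' = insert j S' by ext; simp; grind,
          show S' ∩ (T ∩ insert j S') = T ∩ S' by ext; simp; grind,
          hzero _ hS, hzero _ hS', zero_add, zero_add] at hsub
        exact ih'.trans hsub
      · rwa [inter_insert_of_notMem hjT]
  simpa using key univ (univ_mem_of_isChain h𝒞 hcard)

theorem LinearMap.eq_zero_of_isChain {R M : Type*} [Ring R] [AddCommGroup M] [Module R M]
    {L : (α → R) →ₗ[R] M}
    (hL : ∀ S ∈ 𝒞, L ((S : Set α).indicator 1) = 0) : L = 0 := by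
  have key : ∀ S ∈ 𝒞, ∀ i ∈ S, L (Pi.single i 1) = 0 := by
    intro S
    induction S using Finset.strongInduction with
    | _ S ih =>
      intro hS i hi
      obtain ⟨S', hS', j, hj, rfl⟩ := exists_insert_eq_of_isChain h𝒞 hcard hS ⟨i, hi⟩
      rcases mem_insert.1 hi with rfl | hi'
      · have hsingle : (Pi.single i 1 : α → R) =
            ((insert i S' : Finset α) : Set α).indicator 1 - (S' : Set α).indicator 1 := by
          ext k
          by_cases hk : k = i
          · subst hk; simp [hj]
          · simp [hk, Set.indicator_apply]
        rw [hsingle, map_sub, hL _ hS, hL _ hS', sub_zero]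
      · exact ih S' (ssubset_insert hj) hS' i hi'
  refine (Pi.basisFun R α).ext fun i ↦ ?_
  simpa using key univ (univ_mem_of_isChain h𝒞 hcard) i (mem_univ i)

end

variable [DecidableEq α]

theorem Finset.isChain_insert_empty_insert_univ
    (h𝒞 : IsChain (· ⊆ ·) (𝒞 : Set (Finset α))) :
    IsChain (· ⊆ ·)
      ((insert ∅ (insert univ 𝒞) : Finset (Finset α)) : Set (Finset α)) := by
  push_cast
  exact (h𝒞.insert fun _ _ _ ↦ .inr (subset_univ _)).insert fun _ _ _ ↦ .inl (empty_subset _)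

theorem Finset.card_insert_empty_insert_univ [Nonempty α]
    (h𝒞 : ∀ S ∈ 𝒞, S.Nonempty ∧ S ≠ univ) :
    #(insert ∅ (insert univ 𝒞)) = #𝒞 + 2 := by
  have hempty : ∅ ∉ insert univ 𝒞 := by
    simp only [mem_insert, not_or]
    exact ⟨univ_nonempty.ne_empty.symm, fun h ↦ not_nonempty_empty (h𝒞 ∅ h).1⟩
  rw [card_insert_of_notMem hempty, card_insert_of_notMem fun h ↦ (h𝒞 univ h).2 rfl]

theorem Finset.card_add_one_le_of_isChain [Nonempty α]
    (h𝒞 : IsChain (· ⊆ ·) (𝒞 : Set (Finset α)))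
    (hproper : ∀ S ∈ 𝒞, S.Nonempty ∧ S ≠ univ) :
    #𝒞 + 1 ≤ Fintype.card α := by
  have := card_le_of_isChain (isChain_insert_empty_insert_univ h𝒞)
  rw [card_insert_empty_insert_univ hproper] at this
  omega

end MaximalChain

open Filter Topology in
theorem eq_zero_of_mem_extremePoints_of_eventually_add_smul_mem {E : Type*} [AddCommGroup E]
    [Module ℝ E] {K : Set E} {x w : E} (hx : x ∈ K.extremePoints ℝ)
    (hw : ∀ᶠ c : ℝ in 𝓝 0, x + c • w ∈ K) : w = 0 := by
  obtain ⟨ε, hε, hball⟩ := Metric.eventually_nhds_iff.1 hw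
  have hε2 : |ε| / 2 < ε := by rw [abs_of_pos hε]; linarith
  have hplus : x + (ε / 2) • w ∈ K := hball (by simpa using hε2)
  have hminus : x + (-(ε / 2)) • w ∈ K := hball (by simpa using hε2)
  have hseg : x ∈ openSegment ℝ (x + (ε / 2) • w) (x + (-(ε / 2)) • w) :=
    ⟨1 / 2, 1 / 2, by norm_num, by norm_num, by norm_num, by module⟩
  have hfix := (mem_extremePoints_iff_left.1 hx).2 _ hplus _ hminus hseg
  rw [add_eq_left, smul_eq_zero] at hfix
  exact hfix.resolve_left (half_pos hε).ne'

section SellingBilin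

variable {ι : Type*} [Fintype ι] [LinearOrder ι] (p : ι → ι → ℝ)

noncomputable def sellingBilin : (ι → ℝ) →ₗ[ℝ] (ι → ℝ) →ₗ[ℝ] ℝ :=
  LinearMap.mk₂ ℝ
    (fun a b ↦ ∑ i, ∑ j, if i < j then p i j * (a i - a j) * (b i - b j) else 0)
    (fun _ _ _ ↦ by
      simp only [Pi.add_apply, ← sum_add_distrib]
      congr! 2 with i _ j _; split_ifs <;> ring)
    (fun _ _ _ ↦ by
      simp only [Pi.smul_apply, smul_eq_mul, mul_sum]
      congr! 2 with i _ j _; split_ifs <;> ring)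
    (fun _ _ _ ↦ by
      simp only [Pi.add_apply, ← sum_add_distrib]
      congr! 2 with i _ j _; split_ifs <;> ring)
    (fun _ _ _ ↦ by
      simp only [Pi.smul_apply, smul_eq_mul, mul_sum]
      congr! 2 with i _ j _; split_ifs <;> ring)

theorem sellingBilin_apply (a b : ι → ℝ) :
    sellingBilin p a b = ∑ i, ∑ j, if i < j then p i j * (a i - a j) * (b i - b j) else 0 :=
  rfl

theorem sellingBilin_comm (a b : ι → ℝ) : sellingBilin p a b = sellingBilin p b a := by
  simp only [sellingBilin_apply]
  congr! 2 with i _ j _; split_ifs <;> ring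

theorem sellingBilin_const_left (c : ℝ) (b : ι → ℝ) :
    sellingBilin p (fun _ ↦ c) b = 0 := by
  simp [sellingBilin_apply]

theorem sellingBilin_const_right (a : ι → ℝ) (c : ℝ) :
    sellingBilin p a (fun _ ↦ c) = 0 := by
  rw [sellingBilin_comm, sellingBilin_const_left]

noncomputable def sellingSlack (a : ι → ℝ) (T : Finset ι) : ℝ :=
  sellingBilin p 𝟙[T] 𝟙[T] - 2 * sellingBilin p 𝟙[T] a

theorem sellingSlack_empty (a : ι → ℝ) : sellingSlack p a ∅ = 0 := by
  simp [sellingSlack, sellingBilin_const_left]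

theorem sellingSlack_univ (a : ι → ℝ) : sellingSlack p a univ = 0 := by
  simp [sellingSlack, Pi.one_def, sellingBilin_const_left]

theorem sellingSlack_add (a b : ι → ℝ) (T : Finset ι) :
    sellingSlack p (a + b) T = sellingSlack p a T - 2 * sellingBilin p 𝟙[T] b := by
  simp only [sellingSlack, map_add]
  ring

theorem sellingSlack_smul_add_smul {c₁ c₂ : ℝ} (hc : c₁ + c₂ = 1) (a₁ a₂ : ι → ℝ)
    (T : Finset ι) :
    sellingSlack p (c₁ • a₁ + c₂ • a₂) T =
      c₁ * sellingSlack p a₁ T + c₂ * sellingSlack p a₂ T := by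
  simp only [sellingSlack, map_add, map_smul, smul_eq_mul]
  linear_combination (-sellingBilin p 𝟙[T] 𝟙[T]) * hc

theorem sellingSlack_union_add_inter (a : ι → ℝ) (S T : Finset ι) :
    sellingSlack p a (S ∪ T) + sellingSlack p a (S ∩ T) =
      sellingSlack p a S + sellingSlack p a T +
        2 * sellingBilin p 𝟙[S \ T] 𝟙[T \ S] := by
  set x : ι → ℝ := 𝟙[S \ T]
  set y : ι → ℝ := 𝟙[S ∩ T]
  set z : ι → ℝ := 𝟙[T \ S]
  have hS : 𝟙[S] = x + y := by
    ext i; by_cases i ∈ S <;> by_cases i ∈ T <;> simp [x, y, *]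
  have hT : 𝟙[T] = y + z := by
    ext i; by_cases i ∈ S <;> by_cases i ∈ T <;> simp [y, z, *]
  have hST : 𝟙[S ∪ T] = x + y + z := by
    ext i; by_cases i ∈ S <;> by_cases i ∈ T <;> simp [x, y, z, *]
  simp only [sellingSlack, hS, hT, hST, map_add, LinearMap.add_apply]
  linarith [sellingBilin_comm p x y, sellingBilin_comm p x z, sellingBilin_comm p y z]

open Classical in
noncomputable def sellingTightSets (a : ι → ℝ) : Finset (Finset ι) :=
  {T | T.Nonempty ∧ T ≠ univ ∧ sellingSlack p a T = 0}

theorem mem_sellingTightSets {a : ι → ℝ} {T : Finset ι} :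
    T ∈ sellingTightSets p a ↔ T.Nonempty ∧ T ≠ univ ∧ sellingSlack p a T = 0 := by
  simp [sellingTightSets]

variable {p} (hp : ∀ i j, i < j → 0 < p i j)
include hp

theorem sellingBilin_self_eq_zero {a : ι → ℝ} (ha : sellingBilin p a a = 0) (i j : ι) :
    a i = a j := by
  have hterm : ∀ i j, 0 ≤ if i < j then p i j * (a i - a j) * (a i - a j) else 0 := by
    intro i j
    split_ifs with hij
    · rw [mul_assoc]; exact mul_nonneg (hp i j hij).le (mul_self_nonneg _)
    · exact le_rfl
  have hzero : ∀ i j, i < j → a i = a j := by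
    intro i j hij
    rw [sellingBilin_apply, sum_eq_zero_iff_of_nonneg fun i _ ↦ sum_nonneg fun j _ ↦ hterm i j]
      at ha
    have := (sum_eq_zero_iff_of_nonneg fun j _ ↦ hterm i j).1 (ha i (mem_univ i)) j (mem_univ j)
    rw [if_pos hij, mul_assoc, mul_eq_zero, mul_self_eq_zero, sub_eq_zero] at this
    exact this.resolve_left (hp i j hij).ne'
  rcases lt_trichotomy i j with hij | rfl | hij
  exacts [hzero i j hij, rfl, (hzero j i hij).symm]

theorem sellingBilin_indicator_indicator_neg {U W : Finset ι} (hUW : Disjoint U W)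
    (hU : U.Nonempty) (hW : W.Nonempty) :
    sellingBilin p 𝟙[U] 𝟙[W] < 0 := by
  wlog hlt : ∃ i ∈ U, ∃ j ∈ W, i < j generalizing U W
  · obtain ⟨i, hi⟩ := hU
    obtain ⟨j, hj⟩ := hW
    have hji : j < i := (le_of_not_gt fun h ↦ hlt ⟨i, hi, j, hj, h⟩).lt_of_ne
      fun h ↦ disjoint_left.1 hUW hi (h ▸ hj)
    rw [sellingBilin_comm]
    exact this hUW.symm ⟨j, hj⟩ ⟨i, hi⟩ ⟨j, hj, i, hi, hji⟩
  obtain ⟨i₀, hi₀, j₀, hj₀, hlt⟩ := hlt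
  set u : ι → ℝ := 𝟙[U]
  set w : ι → ℝ := 𝟙[W]
  have hterm : ∀ i j, (if i < j then p i j * (u i - u j) * (w i - w j) else 0) ≤ 0 := by
    intro i j
    split_ifs with hij
    · have := hp i j hij
      simp only [u, w, Set.indicator_apply, Finset.mem_coe, Pi.one_apply]
      split_ifs <;> first | nlinarith | exact absurd ‹_› (disjoint_left.1 hUW ‹_›)
    · exact le_rfl
  have hpair :
      (if i₀ < j₀ then p i₀ j₀ * (u i₀ - u j₀) * (w i₀ - w j₀) else 0) < 0 := by
    simp [u, w, hlt, hi₀, hj₀, disjoint_left.1 hUW hi₀, disjoint_right.1 hUW hj₀,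
      hp i₀ j₀ hlt]
  calc sellingBilin p u w < ∑ _i : ι, ∑ _j : ι, (0 : ℝ) :=
        sum_lt_sum (fun i _ ↦ sum_le_sum fun j _ ↦ hterm i j) ⟨i₀, mem_univ _,
          sum_lt_sum (fun j _ ↦ hterm i₀ j) ⟨j₀, mem_univ _, hpair⟩⟩
    _ = 0 := by simp

theorem sellingBilin_indicator_indicator_nonpos {U W : Finset ι} (hUW : Disjoint U W) :
    sellingBilin p 𝟙[U] 𝟙[W] ≤ 0 := by
  rcases U.eq_empty_or_nonempty with rfl | hU
  · simp [sellingBilin_const_left]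
  rcases W.eq_empty_or_nonempty with rfl | hW
  · simp [sellingBilin_const_right]
  exact (sellingBilin_indicator_indicator_neg hp hUW hU hW).le

theorem sellingSlack_union_add_inter_le (a : ι → ℝ) (S T : Finset ι) :
    sellingSlack p a (S ∪ T) + sellingSlack p a (S ∩ T) ≤
      sellingSlack p a S + sellingSlack p a T := by
  linarith [sellingSlack_union_add_inter p a S T,
    sellingBilin_indicator_indicator_nonpos hp (disjoint_sdiff_sdiff : Disjoint (S \ T) (T \ S))]

theorem isChain_sellingSlack_eq_zero {a : ι → ℝ} (ha : ∀ T, 0 ≤ sellingSlack p a T) :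
    IsChain (· ⊆ ·) {T | sellingSlack p a T = 0} := by
  intro S hS T hT _
  simp only [Set.mem_ofPred_eq] at hS hT
  by_contra h
  rw [not_or] at h
  have hneg := sellingBilin_indicator_indicator_neg hp disjoint_sdiff_sdiff
    (sdiff_nonempty.2 h.1) (sdiff_nonempty.2 h.2)
  linarith [sellingSlack_union_add_inter p a S T, ha (S ∪ T), ha (S ∩ T), hS, hT]

theorem card_sellingTightSets_add_one_le [Nonempty ι] {a : ι → ℝ}
    (ha : ∀ T, 0 ≤ sellingSlack p a T) : #(sellingTightSets p a) + 1 ≤ Fintype.card ι := by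
  refine card_add_one_le_of_isChain ((isChain_sellingSlack_eq_zero hp ha).mono fun T hT ↦ ?_)
    fun T hT ↦ ?_
  · exact ((mem_sellingTightSets p).1 hT).2.2
  · exact ⟨((mem_sellingTightSets p).1 hT).1, ((mem_sellingTightSets p).1 hT).2.1⟩

theorem sellingBilin_indicator_nonneg {b : ι → ℝ} {T : Finset ι} (hb : ∀ i, 0 ≤ b i)
    (hbT : ∀ i ∉ T, b i = 0) : 0 ≤ sellingBilin p b 𝟙[T] := by
  refine sum_nonneg fun i _ ↦ sum_nonneg fun j _ ↦ ?_
  split_ifs with hij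
  · have := hp i j hij
    by_cases hi : i ∈ T <;> by_cases hj : j ∈ T <;> simp [hi, hj, hbT] <;>
      nlinarith [hb i, hb j]
  · exact le_rfl

theorem two_mul_sellingBilin_natCast_le {a : ι → ℝ} (ha : ∀ T, 0 ≤ sellingSlack p a T)
    (m : ι → ℕ) :
    2 * sellingBilin p (fun i ↦ (m i : ℝ)) a ≤
      sellingBilin p (fun i ↦ (m i : ℝ)) (fun i ↦ (m i : ℝ)) := by
  suffices key : ∀ N, ∀ m : ι → ℕ, (∀ i, m i ≤ N) →
      2 * sellingBilin p (fun i ↦ (m i : ℝ)) a ≤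
        sellingBilin p (fun i ↦ (m i : ℝ)) (fun i ↦ (m i : ℝ)) from
    key _ m fun i ↦ single_le_sum (fun j _ ↦ Nat.zero_le (m j)) (mem_univ i)
  intro N
  induction N with
  | zero =>
    intro m hm
    simp [Nat.le_zero.1 (hm _), sellingBilin_const_left]
  | succ N ih =>
    intro m hm
    set T : Finset ι := {i | m i ≠ 0}
    set m' : ι → ℝ := fun i ↦ ((m i - 1 : ℕ) : ℝ)
    have hdecomp : (fun i ↦ (m i : ℝ)) = m' + 𝟙[T] := by
      ext i
      by_cases h : m i = 0
      · simp [T, m', h]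
      · simp [T, m', h, Nat.cast_sub (Nat.one_le_iff_ne_zero.2 h)]
    have hm' := ih (fun i ↦ m i - 1) fun i ↦ by have := hm i; omega
    have hcross : 0 ≤ sellingBilin p m' 𝟙[T] :=
      sellingBilin_indicator_nonneg hp (fun i ↦ Nat.cast_nonneg _) fun i hi ↦ by
        simp [T] at hi
        simp [m', hi]
    have hT := ha T
    rw [hdecomp]
    simp only [map_add, LinearMap.add_apply]
    rw [sellingBilin_comm p 𝟙[T] m']
    unfold sellingSlack at hT
    linarith

theorem two_mul_sellingBilin_intCast_le {a : ι → ℝ} (ha : ∀ T, 0 ≤ sellingSlack p a T)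
    (m : ι → ℤ) :
    2 * sellingBilin p (fun i ↦ (m i : ℝ)) a ≤
      sellingBilin p (fun i ↦ (m i : ℝ)) (fun i ↦ (m i : ℝ)) := by
  obtain ⟨c, hc⟩ := (Set.finite_range m).bddBelow
  have hshift :
      (fun i ↦ (m i : ℝ)) = (fun i ↦ ((m i - c).toNat : ℝ)) + fun _ ↦ (c : ℝ) := by
    ext i
    have : (((m i - c).toNat : ℤ) : ℝ) = ((m i - c : ℤ) : ℝ) :=
      congrArg _ (Int.toNat_of_nonneg (sub_nonneg.2 (hc (Set.mem_range_self i))))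
    push_cast at this
    simp only [Pi.add_apply]
    linarith
  rw [hshift]
  simp only [map_add, LinearMap.add_apply, sellingBilin_const_left, sellingBilin_const_right,
    add_zero]
  exact two_mul_sellingBilin_natCast_le hp ha _

end SellingBilin

section SellingLattice

variable {n : ℕ} (p : Fin (n + 1) → Fin (n + 1) → ℝ)

def sellingCoordₗ (n : ℕ) : (Fin n → ℝ) →ₗ[ℝ] (Fin (n + 1) → ℝ) where
  toFun := sellingCoord
  map_add' x y := by ext i; cases i using Fin.cases <;> simp [sellingCoord]
  map_smul' c x := by ext i; cases i using Fin.cases <;> simp [sellingCoord]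

theorem sellingForm_eq_sellingBilin (x y : Fin n → ℝ) :
    sellingForm n p x y = sellingBilin p (sellingCoordₗ n x) (sellingCoordₗ n y) :=
  rfl

theorem sellingCoordₗ_sellingV (S : Finset (Fin (n + 1))) :
    sellingCoordₗ n (sellingV n S) = 𝟙[S] - fun _ ↦ 𝟙[S] (0 : Fin (n + 1)) := by
  ext i
  cases i using Fin.cases <;> simp [sellingCoordₗ, sellingCoord, sellingV, Set.indicator_apply]

theorem sellingBilin_sellingV_left (S : Finset (Fin (n + 1))) (b : Fin (n + 1) → ℝ) :
    sellingBilin p (sellingCoordₗ n (sellingV n S)) b = sellingBilin p 𝟙[S] b := by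
  rw [sellingCoordₗ_sellingV, map_sub, LinearMap.sub_apply, sellingBilin_const_left, sub_zero]

theorem sellingBilin_sellingV_right (a : Fin (n + 1) → ℝ) (S : Finset (Fin (n + 1))) :
    sellingBilin p a (sellingCoordₗ n (sellingV n S)) = sellingBilin p a 𝟙[S] := by
  rw [sellingBilin_comm, sellingBilin_sellingV_left, sellingBilin_comm]

theorem two_mul_sellingForm_sellingV_eq_iff (S : Finset (Fin (n + 1))) (y : Fin n → ℝ) :
    2 * sellingForm n p (sellingV n S) y = sellingForm n p (sellingV n S) (sellingV n S) ↔
      sellingSlack p (sellingCoordₗ n y) S = 0 := by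
  rw [sellingForm_eq_sellingBilin, sellingForm_eq_sellingBilin, sellingSlack,
    sellingBilin_sellingV_left, sellingBilin_sellingV_left, sellingBilin_sellingV_right,
    sub_eq_zero, eq_comm]

theorem mem_sellingVoronoiCell_iff_intCast {x : Fin n → ℝ} :
    x ∈ sellingVoronoiCell n p ↔ ∀ ℓ : Fin n → ℤ,
      2 * sellingBilin p (sellingCoordₗ n fun i ↦ (ℓ i : ℝ)) (sellingCoordₗ n x) ≤
        sellingBilin p (sellingCoordₗ n fun i ↦ (ℓ i : ℝ))
          (sellingCoordₗ n fun i ↦ (ℓ i : ℝ)) := by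
  refine forall_congr' fun ℓ ↦ ?_
  rw [sellingForm_eq_sellingBilin, sellingForm_eq_sellingBilin,
    show (fun i ↦ x i - (ℓ i : ℝ)) = x - fun i ↦ (ℓ i : ℝ) from rfl, map_sub]
  simp only [map_sub, LinearMap.sub_apply]
  rw [sellingBilin_comm p (sellingCoordₗ n x) (sellingCoordₗ n fun i ↦ (ℓ i : ℝ))]
  constructor <;> intro h <;> linarith

variable {p} (hp : ∀ i j : Fin (n + 1), i < j → 0 < p i j)
include hp

theorem mem_sellingVoronoiCell_iff {x : Fin n → ℝ} :
    x ∈ sellingVoronoiCell n p ↔ ∀ T, 0 ≤ sellingSlack p (sellingCoordₗ n x) T := by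
  rw [mem_sellingVoronoiCell_iff_intCast]
  constructor
  · intro h T
    set ℓ : Fin n → ℤ := fun j ↦
      (if j.succ ∈ T then 1 else 0) - (if 0 ∈ T then 1 else 0)
    have hv : (fun j ↦ (ℓ j : ℝ)) = sellingV n T := by
      ext j
      simp only [ℓ, sellingV]
      push_cast
      rfl
    have := h ℓ
    rw [hv, sellingBilin_sellingV_left, sellingBilin_sellingV_left,
      sellingBilin_sellingV_right] at this
    unfold sellingSlack
    linarith
  · intro h ℓ
    have hcoord : sellingCoordₗ n (fun i ↦ (ℓ i : ℝ)) =
        fun i ↦ ((Fin.cons 0 ℓ : Fin (n + 1) → ℤ) i : ℝ) := by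
      ext i
      cases i using Fin.cases <;> simp [sellingCoordₗ, sellingCoord]
    rw [hcoord]
    exact two_mul_sellingBilin_intCast_le hp h _

end SellingLattice

section SellingChain

variable {n : ℕ} {p : Fin (n + 1) → Fin (n + 1) → ℝ}

variable (p) in
noncomputable def sellingEval (F : Finset (Finset (Fin (n + 1)))) :
    (Fin n → ℝ) →ₗ[ℝ] (F → ℝ) :=
  LinearMap.pi fun S ↦ (sellingBilin p 𝟙[S.1]).comp (sellingCoordₗ n)

theorem sellingEval_apply (F : Finset (Finset (Fin (n + 1)))) (y : Fin n → ℝ) (S : F) :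
    sellingEval p F y S = sellingBilin p 𝟙[S.1] (sellingCoordₗ n y) :=
  rfl

namespace IsSellingChain

variable {A : Finset (Finset (Fin (n + 1)))} (hA : IsSellingChain n A)
include hA

theorem isChain_insert_empty_insert_univ :
    IsChain (· ⊆ ·)
      ((insert ∅ (insert univ A) : Finset (Finset (Fin (n + 1)))) : Set (Finset (Fin (n + 1)))) :=
  Finset.isChain_insert_empty_insert_univ fun S hS T hT _ ↦ hA.2.2 S hS T hT

theorem card_insert_empty_insert_univ :
    #(insert ∅ (insert univ A)) = Fintype.card (Fin (n + 1)) + 1 := by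
  rw [Finset.card_insert_empty_insert_univ hA.2.1, hA.1, Fintype.card_fin]

variable (hp : ∀ i j : Fin (n + 1), i < j → 0 < p i j)
include hp

theorem sellingSlack_nonneg {a : Fin (n + 1) → ℝ} (ha : ∀ S ∈ A, sellingSlack p a S = 0)
    (T : Finset (Fin (n + 1))) : 0 ≤ sellingSlack p a T := by
  refine nonneg_of_submodular_of_isChain hA.isChain_insert_empty_insert_univ
    hA.card_insert_empty_insert_univ (sellingSlack_union_add_inter_le hp a) ?_ T
  simp only [mem_insert, forall_eq_or_imp]
  exact ⟨sellingSlack_empty p a, sellingSlack_univ p a, ha⟩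

theorem eq_zero_of_sellingBilin_eq_zero {w : Fin n → ℝ}
    (hw : ∀ S ∈ A, sellingBilin p 𝟙[S] (sellingCoordₗ n w) = 0) : w = 0 := by
  have hL : (sellingBilin p).flip (sellingCoordₗ n w) = 0 := by
    refine LinearMap.eq_zero_of_isChain hA.isChain_insert_empty_insert_univ
      hA.card_insert_empty_insert_univ ?_
    simp only [mem_insert, forall_eq_or_imp, LinearMap.flip_apply]
    exact ⟨by simp [sellingBilin_const_left], by simp [Pi.one_def, sellingBilin_const_left], hw⟩
  have hself : sellingBilin p (sellingCoordₗ n w) (sellingCoordₗ n w) = 0 :=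
    LinearMap.congr_fun hL (sellingCoordₗ n w)
  ext i
  exact sellingBilin_self_eq_zero hp hself i.succ 0

theorem injective_sellingEval : Function.Injective (sellingEval p A) := by
  rw [← LinearMap.ker_eq_bot, LinearMap.ker_eq_bot']
  exact fun w hw ↦ hA.eq_zero_of_sellingBilin_eq_zero hp fun S hS ↦ congr_fun hw ⟨S, hS⟩

theorem existsUnique_sellingSlack_eq_zero :
    ∃! y : Fin n → ℝ, ∀ S ∈ A, sellingSlack p (sellingCoordₗ n y) S = 0 := by
  have hslack (y : Fin n → ℝ) : (∀ S ∈ A, sellingSlack p (sellingCoordₗ n y) S = 0) ↔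
      sellingEval p A y = fun S ↦ sellingBilin p 𝟙[S.1] 𝟙[S.1] / 2 := by
    simp only [funext_iff, Subtype.forall, sellingEval_apply, sellingSlack]
    refine forall₂_congr fun S _ ↦ ?_
    constructor <;> intro <;> linarith
  have hinj := hA.injective_sellingEval hp
  have hsurj := (LinearMap.injective_iff_surjective_of_finrank_eq_finrank
    (by simp [Module.finrank_fintype_fun_eq_card, hA.1])).1 hinj
  simp_rw [hslack]
  exact Function.Bijective.existsUnique ⟨hinj, hsurj⟩ _

theorem sellingTightSets_eq {a : Fin (n + 1) → ℝ} (ha : ∀ S ∈ A, sellingSlack p a S = 0) :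
    sellingTightSets p a = A := by
  refine (eq_of_subset_of_card_le (fun S hS ↦ (mem_sellingTightSets p).2
    ⟨(hA.2.1 S hS).1, (hA.2.1 S hS).2, ha S hS⟩) ?_).symm
  have := card_sellingTightSets_add_one_le hp (hA.sellingSlack_nonneg hp ha)
  rw [Fintype.card_fin] at this
  rw [hA.1]
  omega

theorem mem_extremePoints {y : Fin n → ℝ}
    (hy : ∀ S ∈ A, sellingSlack p (sellingCoordₗ n y) S = 0) :
    y ∈ Set.extremePoints ℝ (sellingVoronoiCell n p) := by
  refine mem_extremePoints_iff_left.2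
    ⟨(mem_sellingVoronoiCell_iff hp).2 (hA.sellingSlack_nonneg hp hy), ?_⟩
  rintro x₁ hx₁ x₂ hx₂ ⟨c₁, c₂, hc₁, hc₂, hc, rfl⟩
  refine (hA.existsUnique_sellingSlack_eq_zero hp).unique (fun S hS ↦ ?_) hy
  have h₁ := (mem_sellingVoronoiCell_iff hp).1 hx₁ S
  have h₂ := (mem_sellingVoronoiCell_iff hp).1 hx₂ S
  have h := hy S hS
  rw [map_add, map_smul, map_smul, sellingSlack_smul_add_smul p hc] at h
  have := ((add_eq_zero_iff_of_nonneg (mul_nonneg hc₁.le h₁) (mul_nonneg hc₂.le h₂)).1 h).1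
  exact (mul_eq_zero.1 this).resolve_left hc₁.ne'

end IsSellingChain

end SellingChain

section SellingExtremePoint

variable {n : ℕ} {p : Fin (n + 1) → Fin (n + 1) → ℝ}
  (hp : ∀ i j : Fin (n + 1), i < j → 0 < p i j) {x : Fin n → ℝ}
  (hx : x ∈ Set.extremePoints ℝ (sellingVoronoiCell n p))
include hp hx

open Filter Topology in
theorem eq_zero_of_sellingBilin_sellingTightSets_eq_zero {w : Fin n → ℝ}
    (hw : ∀ T ∈ sellingTightSets p (sellingCoordₗ n x),
      sellingBilin p 𝟙[T] (sellingCoordₗ n w) = 0) : w = 0 := by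
  have hslack := (mem_sellingVoronoiCell_iff hp).1 hx.1
  refine eq_zero_of_mem_extremePoints_of_eventually_add_smul_mem hx ?_
  simp_rw [mem_sellingVoronoiCell_iff hp, map_add, sellingSlack_add, map_smul, smul_eq_mul]
  refine eventually_all.2 fun T ↦ ?_
  by_cases hT : sellingSlack p (sellingCoordₗ n x) T = 0
  · have hwT : sellingBilin p 𝟙[T] (sellingCoordₗ n w) = 0 := by
      rcases T.eq_empty_or_nonempty with rfl | hne
      · simp [sellingBilin_const_left]
      by_cases huniv : T = univ
      · simp [huniv, Pi.one_def, sellingBilin_const_left]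
      exact hw T ((mem_sellingTightSets p).2 ⟨hne, huniv, hT⟩)
    simp [hT, hwT]
  · have hpos : 0 < sellingSlack p (sellingCoordₗ n x) T := (hslack T).lt_of_ne' hT
    exact (continuousAt_const.eventually_lt (by fun_prop) (by simpa using hpos)).mono
      fun _ hc ↦ hc.le

theorem isSellingChain_sellingTightSets :
    IsSellingChain n (sellingTightSets p (sellingCoordₗ n x)) := by
  have hslack := (mem_sellingVoronoiCell_iff hp).1 hx.1
  have hle := card_sellingTightSets_add_one_le hp hslack
  have hinj : Function.Injective (sellingEval p (sellingTightSets p (sellingCoordₗ n x))) := by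
    rw [← LinearMap.ker_eq_bot, LinearMap.ker_eq_bot']
    exact fun w hw ↦
      eq_zero_of_sellingBilin_sellingTightSets_eq_zero hp hx fun T hT ↦ congr_fun hw ⟨T, hT⟩
  have hge := LinearMap.finrank_le_finrank_of_injective hinj
  simp only [Module.finrank_fintype_fun_eq_card, Fintype.card_fin, Fintype.card_coe] at hle hge
  refine ⟨by omega, fun S hS ↦ ?_, fun S hS T hT ↦ ?_⟩
  · exact ⟨((mem_sellingTightSets p).1 hS).1, ((mem_sellingTightSets p).1 hS).2.1⟩
  · exact (isChain_sellingSlack_eq_zero hp hslack).total ((mem_sellingTightSets p).1 hS).2.2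
      ((mem_sellingTightSets p).1 hT).2.2

end SellingExtremePoint

theorem statement19_general (n : ℕ) (p : Fin (n + 1) → Fin (n + 1) → ℝ)
    (hp : ∀ i j : Fin (n + 1), (i : ℕ) < (j : ℕ) → 0 < p i j) :
    ∃ s : {A : Finset (Finset (Fin (n + 1))) // IsSellingChain n A} → (Fin n → ℝ),
      (∀ A, ∀ S ∈ A.1,
        2 * sellingForm n p (sellingV n S) (s A) =
          sellingForm n p (sellingV n S) (sellingV n S)) ∧
      (∀ A, ∀ y : Fin n → ℝ,
        (∀ S ∈ A.1,
          2 * sellingForm n p (sellingV n S) y =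
            sellingForm n p (sellingV n S) (sellingV n S)) → y = s A) ∧
      (∀ A, s A ∈ sellingVoronoiCell n p) ∧
      Function.Injective s ∧
      Set.range s = Set.extremePoints ℝ (sellingVoronoiCell n p) := by
  simp_rw [two_mul_sellingForm_sellingV_eq_iff]
  choose s hs using fun A : {A // IsSellingChain n A} ↦
    (A.2.existsUnique_sellingSlack_eq_zero hp).exists
  have hunique (A : {A // IsSellingChain n A}) {y : Fin n → ℝ}
      (hy : ∀ S ∈ A.1, sellingSlack p (sellingCoordₗ n y) S = 0) : y = s A :=
    (A.2.existsUnique_sellingSlack_eq_zero hp).unique hy (hs A)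
  refine ⟨s, hs, fun A y ↦ hunique A,
    fun A ↦ (mem_sellingVoronoiCell_iff hp).2 (A.2.sellingSlack_nonneg hp (hs A)),
    fun A B hAB ↦ Subtype.ext ?_, Set.Subset.antisymm ?_ fun x hx ↦ ?_⟩
  · rw [← A.2.sellingTightSets_eq hp (hs A), ← B.2.sellingTightSets_eq hp (hs B), hAB]
  · rintro _ ⟨A, rfl⟩
    exact A.2.mem_extremePoints hp (hs A)
  · exact ⟨⟨_, isSellingChain_sellingTightSets hp hx⟩, (hunique _ fun S hS ↦
      ((mem_sellingTightSets p).1 hS).2.2).symm⟩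

/-- Part 1 of Proposition B.10: (a) for every chain `A` there is a unique point `s_A`
with `2⟨v_S, s_A⟩_p = ⟨v_S, v_S⟩_p` for all `S ∈ A`; (b) `s_A` lies in the Voronoi cell;
(c) `A ↦ s_A` is a bijection from the chains onto the extreme points (vertices) of the
Voronoi cell. -/
theorem statement19 (n : ℕ) (hn : 1 ≤ n) (p : Fin (n + 1) → Fin (n + 1) → ℝ)
    (hp : ∀ i j : Fin (n + 1), (i : ℕ) < (j : ℕ) → 0 < p i j) :
    ∃ s : {A : Finset (Finset (Fin (n + 1))) // IsSellingChain n A} → (Fin n → ℝ),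
      (∀ A, ∀ S ∈ A.1,
        2 * sellingForm n p (sellingV n S) (s A) =
          sellingForm n p (sellingV n S) (sellingV n S)) ∧
      (∀ A, ∀ y : Fin n → ℝ,
        (∀ S ∈ A.1,
          2 * sellingForm n p (sellingV n S) y =
            sellingForm n p (sellingV n S) (sellingV n S)) → y = s A) ∧
      (∀ A, s A ∈ sellingVoronoiCell n p) ∧
      Function.Injective s ∧
      Set.range s = Set.extremePoints ℝ (sellingVoronoiCell n p) :=
  statement19_general n p hp
end
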